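/- Let X be a real Banach space, T : X ⇉ X* a maximal monotone operator, and h ∈ H(T). Define ĥ := max(h, J h) (pointwise maximum). Then ĥ ∈ H(T) and ĥ ≥ J ĥ, i.e., ĥ ∈ H_a(T). -/

import Mathlib

/- Setting: `X` is a real Banach space, `NormedSpace.Dual ℝ X` its topological dual.
A point-to-set operator `T : X ⇉ X*` is identified with its graph,
a subset of `X × NormedSpace.Dual ℝ X`.  Extended-real-valued functions
(`ℝ ∪ {+∞}`) are modelled by `EReal`. -/

noncomputable section

variable {X : Type*} [NormedAddCommGroup X] [NormedSpace ℝ X]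

/-- The duality pairing `⟨x, x*⟩ = x*(x)` of a pair `p = (x, x*)`. -/
def pairingFn (p : X × StrongDual ℝ X) : ℝ := p.2 p.1

/-- Convexity for extended-real-valued functions. -/
def EConvexOn {E : Type*} [AddCommMonoid E] [Module ℝ E] (h : E → EReal) : Prop :=
  ∀ p q : E, ∀ a b : ℝ, 0 ≤ a → 0 ≤ b → a + b = 1 →
    h (a • p + b • q) ≤ (a : EReal) * h p + (b : EReal) * h q

/-- `T` is a monotone operator: `⟨x - y, x* - y*⟩ ≥ 0` on the graph. -/
def MonotoneOp (T : Set (X × StrongDual ℝ X)) : Prop :=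
  ∀ p ∈ T, ∀ q ∈ T, 0 ≤ (p.2 - q.2) (p.1 - q.1)

/-- `T` is maximal monotone. -/
def MaximalMonotoneOp (T : Set (X × StrongDual ℝ X)) : Prop :=
  MonotoneOp T ∧
    ∀ p : X × StrongDual ℝ X, (∀ q ∈ T, 0 ≤ (p.2 - q.2) (p.1 - q.1)) → p ∈ T

/-- The transform `J h (x, x*) = sup_{(y, y*)} ⟨x, y*⟩ + ⟨y, x*⟩ - h (y, y*)`,
i.e. `J h (x, x*) = h* (x*, x)` via the canonical injection `X ↪ X**`. -/
def JT (h : X × StrongDual ℝ X → EReal) : X × StrongDual ℝ X → EReal :=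
  fun p => ⨆ q : X × StrongDual ℝ X, (((q.2 p.1 + p.2 q.1 : ℝ) : EReal) - h q)

/-- The family `H(T)` of convex lower semicontinuous functions on `X × X*`
majorizing the duality product and coinciding with it on `T`. -/
def HT (T : Set (X × StrongDual ℝ X)) : Set (X × StrongDual ℝ X → EReal) :=
  { h | EConvexOn h ∧ LowerSemicontinuous h ∧
      (∀ p : X × StrongDual ℝ X, (pairingFn p : EReal) ≤ h p) ∧
      (∀ p ∈ T, h p = (pairingFn p : EReal)) }

/-- The subfamily `H_a(T) = { h ∈ H(T) | h ≥ J h }`. -/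
def Ha (T : Set (X × StrongDual ℝ X)) : Set (X × StrongDual ℝ X → EReal) :=
  { h | h ∈ HT T ∧ JT h ≤ h }

/-- For `h ∈ H(T)`, the family `L(h) = { g ∈ H(T) | h ≥ g ≥ J g }`. -/
def Lfam (T : Set (X × StrongDual ℝ X)) (h : X × StrongDual ℝ X → EReal) :
    Set (X × StrongDual ℝ X → EReal) :=
  { g | g ∈ HT T ∧ g ≤ h ∧ JT g ≤ g }

/-- The Fenchel–Legendre conjugate `f*(x*) = sup_x ⟨x, x*⟩ - f x`. -/
def fconj (f : X → EReal) : StrongDual ℝ X → EReal :=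
  fun x' => ⨆ x : X, (((x' x : ℝ) : EReal) - f x)

/-- The `ε`-subdifferential:
`∂_ε f (x) = { x* | f y ≥ f x + ⟨y - x, x*⟩ - ε for all y }`. -/
def epsSubdiff (f : X → EReal) (ε : ℝ) (x : X) : Set (StrongDual ℝ X) :=
  { x' | ∀ y : X, f x + ((x' (y - x) - ε : ℝ) : EReal) ≤ f y }

/-- The graph of the subdifferential `∂f = ∂_0 f`. -/
def subdiffGraph (f : X → EReal) : Set (X × StrongDual ℝ X) :=
  { p | p.2 ∈ epsSubdiff f 0 p.1 }

/-- The `ε`-enlargement `T^ε (x) = { x* | ⟨x - y, x* - y*⟩ ≥ -ε for all (y, y*) ∈ T }`. -/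
def enl (T : Set (X × StrongDual ℝ X)) (ε : ℝ) (x : X) :
    Set (StrongDual ℝ X) :=
  { x' | ∀ q ∈ T, -ε ≤ (x' - q.2) (x - q.1) }

/-- The Fitzpatrick function
`φ_T (x, x*) = sup_{(y, y*) ∈ T} ⟨x, y*⟩ + ⟨y, x*⟩ - ⟨y, y*⟩`. -/
def fitz (T : Set (X × StrongDual ℝ X)) : X × StrongDual ℝ X → EReal :=
  fun p => ⨆ q ∈ T, ((q.2 p.1 + p.2 q.1 - q.2 q.1 : ℝ) : EReal)

/-! For `p ∈ T` and any `q`, convexity of `h` on the segment from `p` to `q`, together with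
`h ≥ ⟨·,·⟩` and equality at `p`, gives after dividing by the segment parameter `t` and letting
`t → 0⁺` the inequality `⟨p.1, q.2⟩ + ⟨q.1, p.2⟩ ≤ ⟨p.1, p.2⟩ + h q`. Taking the supremum over `q`,
`J h ≤ ⟨·,·⟩` on `T`, so `max (h, J h)` still equals the duality product there. Being a supremum
of continuous affine functions, `J h` is convex and lower semicontinuous, and `J` is antitone, so
`J (max (h, J h)) ≤ J h ≤ max (h, J h)`. -/

section EConvexOn

variable {E : Type*} [AddCommMonoid E] [Module ℝ E]

theorem EConvexOn.sup {f g : E → EReal} (hf : EConvexOn f) (hg : EConvexOn g) :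
    EConvexOn (f ⊔ g) := by
  intro p q a b ha hb hab
  refine sup_le ((hf p q a b ha hb hab).trans ?_) ((hg p q a b ha hb hab).trans ?_) <;>
    gcongr <;> simp

theorem EConvexOn.iSup {ι : Sort*} {f : ι → E → EReal} (hf : ∀ i, EConvexOn (f i)) :
    EConvexOn fun x => ⨆ i, f i x := by
  intro p q a b ha hb hab
  refine iSup_le fun i => (hf i p q a b ha hb hab).trans ?_
  gcongr
  exacts [le_iSup (f · p) i, le_iSup (f · q) i]

theorem econvexOn_coe_sub (ℓ : E →ₗ[ℝ] ℝ) (c : EReal) :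
    EConvexOn fun p => (ℓ p : EReal) - c := by
  intro p q a b ha hb hab
  induction c using EReal.rec with
  | bot =>
    simp only [EReal.coe_sub_bot, top_le_iff]
    rcases ha.eq_or_lt with rfl | ha
    · simp [show b = 1 by linarith]
    · rw [EReal.coe_mul_top_of_pos ha, EReal.top_add_of_ne_bot]
      exact ne_bot_of_le_ne_bot EReal.zero_ne_bot
        (EReal.mul_nonneg (EReal.coe_nonneg.2 hb) le_top)
  | top => simp
  | coe c =>
    simp only [map_add, map_smul, smul_eq_mul]
    norm_cast
    exact le_of_eq (by linear_combination c * hab)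

end EConvexOn

theorem Continuous.ereal_coe_sub {E : Type*} [TopologicalSpace E] {ℓ : E → ℝ}
    (hℓ : Continuous ℓ) (c : EReal) : Continuous fun p => (ℓ p : EReal) - c := by
  induction c using EReal.rec with
  | bot => simpa using continuous_const
  | top => simpa using continuous_const
  | coe c => exact continuous_coe_real_ereal.comp (hℓ.sub continuous_const)

def couplingWith (q : X × StrongDual ℝ X) : X × StrongDual ℝ X →L[ℝ] ℝ :=
  q.2.comp (ContinuousLinearMap.fst ℝ X _) +
    (ContinuousLinearMap.apply ℝ ℝ q.1).comp (ContinuousLinearMap.snd ℝ X _)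

@[simp]
theorem couplingWith_apply (q p : X × StrongDual ℝ X) : couplingWith q p = q.2 p.1 + p.2 q.1 :=
  rfl

theorem antitone_JT : Antitone (JT (X := X)) := fun _ _ hgh _ =>
  iSup_mono fun q => EReal.sub_le_sub le_rfl (hgh q)

theorem econvexOn_JT (h : X × StrongDual ℝ X → EReal) : EConvexOn (JT h) :=
  EConvexOn.iSup fun q => econvexOn_coe_sub (couplingWith q).toLinearMap (h q)

theorem lowerSemicontinuous_JT (h : X × StrongDual ℝ X → EReal) : LowerSemicontinuous (JT h) :=
  lowerSemicontinuous_iSup fun q =>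
    ((couplingWith q).continuous.ereal_coe_sub (h q)).lowerSemicontinuous

theorem pairingFn_smul_add_smul (p q : X × StrongDual ℝ X) (a b : ℝ) :
    pairingFn (a • p + b • q) =
      a ^ 2 * pairingFn p + a * b * couplingWith q p + b ^ 2 * pairingFn q := by
  simp only [pairingFn, couplingWith_apply, Prod.fst_add, Prod.snd_add, Prod.smul_fst,
    Prod.smul_snd, map_add, map_smul, FunLike.coe_add,
    FunLike.coe_smul, Pi.add_apply, Pi.smul_apply, smul_eq_mul]
  ring

theorem coupling_le_pairingFn_add {h : X × StrongDual ℝ X → EReal} (hconv : EConvexOn h)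
    (hge : ∀ p, (pairingFn p : EReal) ≤ h p) {p : X × StrongDual ℝ X}
    (hp : h p = pairingFn p) (q : X × StrongDual ℝ X) :
    (couplingWith q p : EReal) ≤ pairingFn p + h q := by
  induction hq : h q using EReal.rec with
  | bot => exact absurd (hq ▸ hge q) (by simp)
  | top => simp
  | coe c =>
    norm_cast
    have hseg : ∀ t ∈ Set.Ioc (0 : ℝ) 1,
        (1 - t) * (couplingWith q p - pairingFn p) + t * pairingFn q ≤ c := by
      rintro t ⟨ht₀, ht₁⟩
      have hconvt := (hge _).trans (hconv p q (1 - t) t (by linarith) ht₀.le (by ring))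
      rw [hp, hq, pairingFn_smul_add_smul] at hconvt
      norm_cast at hconvt
      have hscaled : t * ((1 - t) * (couplingWith q p - pairingFn p) + t * pairingFn q - c) ≤ 0 := by
        linear_combination hconvt
      linarith [nonpos_of_mul_nonpos_right hscaled ht₀]
    let f : ℝ → ℝ := fun t => (1 - t) * (couplingWith q p - pairingFn p) + t * pairingFn q
    have hf : Continuous f := by fun_prop
    have hf₀ := le_of_tendsto ((hf.tendsto 0).mono_left nhdsWithin_le_nhds)
      (Filter.eventually_of_mem (Ioc_mem_nhdsGT zero_lt_one) hseg)
    simp only [f, sub_zero, one_mul, zero_mul, add_zero] at hf₀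
    linarith

theorem JT_le_pairingFn_of_eq {h : X × StrongDual ℝ X → EReal} (hconv : EConvexOn h)
    (hge : ∀ p, (pairingFn p : EReal) ≤ h p) {p : X × StrongDual ℝ X}
    (hp : h p = pairingFn p) : JT h p ≤ pairingFn p :=
  iSup_le fun q => EReal.sub_le_of_le_add (coupling_le_pairingFn_add hconv hge hp q)

theorem max_with_JT_mem_Ha_general
    (T : Set (X × StrongDual ℝ X))
    (h : X × StrongDual ℝ X → EReal) (hh : h ∈ HT T) :
    h ⊔ JT h ∈ Ha T := by
  obtain ⟨hconv, hlsc, hge, heq⟩ := hh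
  refine ⟨⟨hconv.sup (econvexOn_JT h), hlsc.sup (lowerSemicontinuous_JT h),
    fun p => (hge p).trans le_sup_left, fun p hp => ?_⟩, ?_⟩
  · exact le_antisymm (sup_le (heq p hp).le (JT_le_pairingFn_of_eq hconv hge (heq p hp)))
      ((hge p).trans le_sup_left)
  · exact (antitone_JT le_sup_left).trans le_sup_right

/-- for `h ∈ H(T)`, the pointwise maximum `ĥ = max (h, J h)` belongs to
`H_a(T)`, i.e. `ĥ ∈ H(T)` and `ĥ ≥ J ĥ`. -/
theorem max_with_JT_mem_Ha [CompleteSpace X]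
    (T : Set (X × StrongDual ℝ X)) (hT : MaximalMonotoneOp T)
    (h : X × StrongDual ℝ X → EReal) (hh : h ∈ HT T) :
    h ⊔ JT h ∈ Ha T :=
  max_with_JT_mem_Ha_general T h hh
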